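/- arXiv:2501.00810 — 5 statements merged into one kernel-verified Lean document; each statement's English description precedes it below -/
import Mathlib

section
/- Let $n \ge 1$ and $1 \le r < n$. Suppose complex numbers $D^b_{ac}$ ($1\le a,b,c\le n$) satisfy: $D^a_{\alpha b} = 0$ for all $r < \alpha \le n$ and all $a,b$; $D^j_{ik} = 0$ unless $i > j$ for $1\le i,j,k\le r$; and the diagonal curvature values $R_{a\bar a a\bar a} = \sum_s(|D^s_{aa}|^2) - \sum_s(D^a_{sa}\overline{D^a_{sa}} + D^a_{sa}\overline{D^a_{as}} + \overline{D^a_{sa}}D^a_{as})$ are all equal to a common constant $c$ for $a \in \{r, n\}$ (i.e., $R_{r\bar r r\bar r} = R_{n\bar n n\bar n} = c$). Then $c = 0$. -/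
open Finset Complex

/-- (Lemma 3.1) For an admissible frame of a solvable Hermitian Lie algebra
with complex commutator, if the diagonal curvature values at indices `r` and `n` are both
equal to a constant `c`, then `c = 0`. Indices run over `1,…,n`; `D j i k = D^j_{ik}`. -/
theorem constant_must_be_zero
    (n r : ℕ) (hr : 1 ≤ r) (hrn : r < n) (c : ℝ)
    (D : ℕ → ℕ → ℕ → ℂ)
    (h1 : ∀ α ∈ Finset.Icc 1 n, r < α →
        ∀ a ∈ Finset.Icc 1 n, ∀ b ∈ Finset.Icc 1 n, D a α b = 0)
    (h2 : ∀ i ∈ Finset.Icc 1 r, ∀ j ∈ Finset.Icc 1 r, ∀ k ∈ Finset.Icc 1 r,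
        i ≤ j → D j i k = 0)
    (hRr : (∑ s ∈ Finset.Icc 1 n, ((Complex.normSq (D s r r) : ℂ)))
        - (∑ s ∈ Finset.Icc 1 n, (D r s r * starRingEnd ℂ (D r s r)
            + D r s r * starRingEnd ℂ (D r r s)
            + starRingEnd ℂ (D r s r) * D r r s)) = (c : ℂ))
    (hRn : (∑ s ∈ Finset.Icc 1 n, ((Complex.normSq (D s n n) : ℂ)))
        - (∑ s ∈ Finset.Icc 1 n, (D n s n * starRingEnd ℂ (D n s n)
            + D n s n * starRingEnd ℂ (D n n s)
            + starRingEnd ℂ (D n s n) * D n n s)) = (c : ℂ)) :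
    c = 0 := by
  have hr_in : r ∈ Finset.Icc 1 n := by simp; omega
  have hn_in : n ∈ Finset.Icc 1 n := by simp; omega
  -- D r s r = 0 for all s in Icc 1 n
  have hDrsr : ∀ s ∈ Finset.Icc 1 n, D r s r = 0 := by
    intro s hs
    simp only [Finset.mem_Icc] at hs
    rcases le_or_gt s r with h | h
    · exact h2 s (by simp; omega) r (by simp; omega) r (by simp; omega) h
    · exact h1 s (by simp; omega) h r hr_in r hr_in
  have hDn : ∀ a b, a ∈ Finset.Icc 1 n → b ∈ Finset.Icc 1 n → D a n b = 0 :=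
    fun a b ha hb => h1 n hn_in hrn a ha b hb
  -- first: c ≥ 0
  have hc1 : (c : ℂ) = ((∑ s ∈ Finset.Icc 1 n, Complex.normSq (D s r r) : ℝ) : ℂ) := by
    rw [← hRr]
    have : (∑ s ∈ Finset.Icc 1 n, (D r s r * starRingEnd ℂ (D r s r)
            + D r s r * starRingEnd ℂ (D r r s)
            + starRingEnd ℂ (D r s r) * D r r s)) = 0 := by
      apply Finset.sum_eq_zero
      intro s hs
      rw [hDrsr s hs]
      simp
    rw [this]
    push_cast
    ring
  have hc2 : (c : ℂ) = ((-∑ s ∈ Finset.Icc 1 n, Complex.normSq (D n s n) : ℝ) : ℂ) := by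
    rw [← hRn]
    have e1 : (∑ s ∈ Finset.Icc 1 n, ((Complex.normSq (D s n n) : ℂ))) = 0 := by
      apply Finset.sum_eq_zero
      intro s hs
      rw [hDn s n hs hn_in]
      simp
    have e2 : (∑ s ∈ Finset.Icc 1 n, (D n s n * starRingEnd ℂ (D n s n)
            + D n s n * starRingEnd ℂ (D n n s)
            + starRingEnd ℂ (D n s n) * D n n s))
        = ∑ s ∈ Finset.Icc 1 n, ((Complex.normSq (D n s n) : ℂ)) := by
      apply Finset.sum_congr rfl
      intro s hs
      rw [hDn n s hn_in hs, Complex.mul_conj]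
      simp
    rw [e1, e2]
    push_cast
    ring
  have h1' : c = ∑ s ∈ Finset.Icc 1 n, Complex.normSq (D s r r) := by
    exact_mod_cast hc1
  have h2' : c = -∑ s ∈ Finset.Icc 1 n, Complex.normSq (D n s n) := by
    exact_mod_cast hc2
  have hnn1 : 0 ≤ ∑ s ∈ Finset.Icc 1 n, Complex.normSq (D s r r) :=
    Finset.sum_nonneg fun s _ => Complex.normSq_nonneg _
  have hnn2 : 0 ≤ ∑ s ∈ Finset.Icc 1 n, Complex.normSq (D n s n) :=
    Finset.sum_nonneg fun s _ => Complex.normSq_nonneg _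
  linarith [h1' ▸ hnn1]
end

section
/- Let $r \ge 1$ and suppose $D^j_{ik}$ ($1\le i,j,k\le r$) are complex numbers with $D^j_{ik} = 0$ unless $i > j$, and $D^s_{rr} = 0$ for all $s$. Suppose further that for every $1 \le i < r$ the identity $\sum_{s=1}^{r}|D^s_{ri} + D^s_{ir}|^2 = \sum_{s=1}^{r}(|D^i_{sr}|^2 + 2\,\mathrm{Re}(\overline{D^i_{sr}}D^i_{rs}))$ holds. Then $D^s_{ri} + D^s_{ir} = 0$, $D^i_{jr} = 0$, and $D^i_{rj} = 0$ for all $1\le i,j\le r$ and all $1\le s\le r$. -/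
open Finset Complex

/-- The inductive claim (3.8)–(3.9) of Lemma 3.2: with the strict
triangularity `D^j_{ik} = 0` unless `i > j`, `D^s_{rr} = 0`, and identity (3.8)
for every `i < r`, one obtains `D^s_{ri} + D^s_{ir} = 0`, `D^i_{jr} = 0`,
`D^i_{rj} = 0` for all indices in `{1,…,r}`. Convention: `D j i k = D^j_{ik}`. -/
theorem inductive_vanishing_claim
    (r : ℕ) (hr : 1 ≤ r) (D : ℕ → ℕ → ℕ → ℂ)
    (htri : ∀ i ∈ Finset.Icc 1 r, ∀ j ∈ Finset.Icc 1 r, ∀ k ∈ Finset.Icc 1 r,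
        i ≤ j → D j i k = 0)
    (hDrr : ∀ s ∈ Finset.Icc 1 r, D s r r = 0)
    (hid : ∀ i, 1 ≤ i → i < r →
        (∑ s ∈ Finset.Icc 1 r, Complex.normSq (D s r i + D s i r))
          = ∑ s ∈ Finset.Icc 1 r,
              (Complex.normSq (D i s r)
                + 2 * (starRingEnd ℂ (D i s r) * D i r s).re)) :
    ∀ i ∈ Finset.Icc 1 r, ∀ j ∈ Finset.Icc 1 r, ∀ s ∈ Finset.Icc 1 r,
      D s r i + D s i r = 0 ∧ D i j r = 0 ∧ D i r j = 0 := by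
  have hrmem : r ∈ Finset.Icc 1 r := Finset.mem_Icc.2 ⟨hr, le_rfl⟩
  -- Main downward induction: P i := (∀ s, D s r i + D s i r = 0) ∧ (∀ s, D i s r = 0)
  --                                ∧ (∀ s ≥ i, D i r s = 0)
  have main : ∀ k : ℕ, ∀ i, 1 ≤ i → i ≤ r → r - i ≤ k →
      ((∀ s ∈ Finset.Icc 1 r, D s r i + D s i r = 0) ∧
       (∀ s ∈ Finset.Icc 1 r, D i s r = 0) ∧
       (∀ s ∈ Finset.Icc 1 r, i ≤ s → D i r s = 0)) := by
    intro k
    induction k with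
    | zero =>
      intro i h1 h2 h3
      have hir : i = r := by omega
      subst hir
      refine ⟨fun s hs => by rw [hDrr s hs]; ring,
              fun s hs => htri s hs i hrmem i hrmem (Finset.mem_Icc.1 hs).2,
              fun s hs hle => ?_⟩
      have : s = i := le_antisymm (Finset.mem_Icc.1 hs).2 hle
      rw [this]
      exact hDrr i hrmem
    | succ k ih =>
      intro i h1 h2 h3
      by_cases hir : i = r
      · subst hir
        refine ⟨fun s hs => by rw [hDrr s hs]; ring,
                fun s hs => htri s hs i hrmem i hrmem (Finset.mem_Icc.1 hs).2,
                fun s hs hle => ?_⟩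
        have : s = i := le_antisymm (Finset.mem_Icc.1 hs).2 hle
        rw [this]
        exact hDrr i hrmem
      · have hlt : i < r := lt_of_le_of_ne h2 hir
        have himem : i ∈ Finset.Icc 1 r := Finset.mem_Icc.2 ⟨h1, h2⟩
        -- induction hypothesis for all s > i
        have IH : ∀ s, i < s → s ≤ r →
            ((∀ t ∈ Finset.Icc 1 r, D t r s + D t s r = 0) ∧
             (∀ t ∈ Finset.Icc 1 r, D s t r = 0) ∧
             (∀ t ∈ Finset.Icc 1 r, s ≤ t → D s r t = 0)) := by
          intro s hs1 hs2
          exact ih s (by omega) hs2 (by omega)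
        -- rewrite the RHS of (3.8) at level i
        have hRHS : ∀ s ∈ Finset.Icc 1 r,
            (Complex.normSq (D i s r)
              + 2 * (starRingEnd ℂ (D i s r) * D i r s).re)
              = - (if i < s then Complex.normSq (D i s r) else 0) := by
          intro s hs
          by_cases h : i < s
          · have hadd : D i r s + D i s r = 0 :=
              (IH s h (Finset.mem_Icc.1 hs).2).1 i himem
            have heq : D i r s = - D i s r := by
              linear_combination hadd
            rw [heq, if_pos h]
            simp only [mul_neg, Complex.neg_re, Complex.mul_re, Complex.conj_re,
              Complex.conj_im, Complex.normSq_apply]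
            ring
          · have hz : D i s r = 0 :=
              htri s hs i himem r hrmem (by omega)
            rw [hz, if_neg h]
            simp
        have hid' := hid i h1 hlt
        rw [Finset.sum_congr rfl hRHS, Finset.sum_neg_distrib] at hid'
        have hsum : ∑ s ∈ Finset.Icc 1 r,
            (Complex.normSq (D s r i + D s i r)
              + (if i < s then Complex.normSq (D i s r) else 0)) = 0 := by
          rw [Finset.sum_add_distrib]
          linarith [hid']
        have hterm : ∀ s ∈ Finset.Icc 1 r,
            Complex.normSq (D s r i + D s i r)
              + (if i < s then Complex.normSq (D i s r) else 0) = 0 := by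
          intro s hs
          refine (Finset.sum_eq_zero_iff_of_nonneg ?_).1 hsum s hs
          intro t _
          have h1' : 0 ≤ Complex.normSq (D t r i + D t i r) := Complex.normSq_nonneg _
          have h2' : 0 ≤ (if i < t then Complex.normSq (D i t r) else 0) := by
            split_ifs
            · exact Complex.normSq_nonneg _
            · exact le_rfl
          linarith
        have hA : ∀ s ∈ Finset.Icc 1 r, D s r i + D s i r = 0 := by
          intro s hs
          have h := hterm s hs
          have h1' : 0 ≤ Complex.normSq (D s r i + D s i r) := Complex.normSq_nonneg _
          have h2' : 0 ≤ (if i < s then Complex.normSq (D i s r) else 0) := by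
            split_ifs
            · exact Complex.normSq_nonneg _
            · exact le_rfl
          have : Complex.normSq (D s r i + D s i r) = 0 := by linarith
          exact Complex.normSq_eq_zero.1 this
        have hB : ∀ s ∈ Finset.Icc 1 r, D i s r = 0 := by
          intro s hs
          by_cases h : i < s
          · have hh := hterm s hs
            have h1' : 0 ≤ Complex.normSq (D s r i + D s i r) := Complex.normSq_nonneg _
            rw [if_pos h] at hh
            have : Complex.normSq (D i s r) = 0 := by
              have := Complex.normSq_nonneg (D i s r)
              linarith
            exact Complex.normSq_eq_zero.1 this
          · exact htri s hs i himem r hrmem (by omega)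
        refine ⟨hA, hB, fun s hs hle => ?_⟩
        rcases eq_or_lt_of_le hle with heq | h
        · subst heq
          have h0 := hA i himem
          have h1' : D i i r = 0 := htri i himem i himem r hrmem le_rfl
          rw [h1'] at h0
          simpa using h0
        · have hadd : D i r s + D i s r = 0 :=
            (IH s h (Finset.mem_Icc.1 hs).2).1 i himem
          have h0 := hB s hs
          rw [h0] at hadd
          simpa using hadd
  intro i hi j hj s hs
  obtain ⟨hi1, hi2⟩ := Finset.mem_Icc.1 hi
  obtain ⟨hj1, hj2⟩ := Finset.mem_Icc.1 hj
  have Pi := main r i hi1 hi2 (Nat.sub_le r i)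
  have Pj := main r j hj1 hj2 (Nat.sub_le r j)
  refine ⟨Pi.1 s hs, Pi.2.1 j hj, ?_⟩
  by_cases h : i ≤ j
  · exact Pi.2.2 j hj h
  · have hadd := Pj.1 i hi
    have h0 := Pi.2.1 j hj
    rw [h0] at hadd
    simpa using hadd
end

section
/- Consider the real $2(r+1)$-dimensional Lie algebra $\mathfrak{h} = \mathbb{R}\{X_1,\dots,X_r,Y_1,\dots,Y_r,Z,W\}$ with only nonzero brackets $[X_i,Z] = a_iX_i + b_iY_i$ and $[Y_i,Z] = -b_iX_i + a_iY_i$ for constants $a_i,b_i \in \mathbb{R}$ with $(a_i,b_i) \ne (0,0)$. Define an almost complex structure $J$ by $JW = Z$, $JZ = -W$, $JX_i = Y_i$, $JY_i = -X_i$. Then $J$ is integrable, i.e., $[x,y] - [Jx,Jy] + J[Jx,y] + J[x,Jy] = 0$ for all $x,y \in \mathfrak{h}$. -/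
open Complex

/-- Elements `(x, y, z, w)` representing `∑ x_i X_i + ∑ y_i Y_i + z Z + w W`. -/
abbrev HeisV (r : ℕ) := (Fin r → ℝ) × (Fin r → ℝ) × ℝ × ℝ

/-- The bracket of Example 1: only nonzero brackets are
`[X_i, Z] = a_i X_i + b_i Y_i` and `[Y_i, Z] = -b_i X_i + a_i Y_i`. -/
def heisBr (r : ℕ) (a b : Fin r → ℝ) (u v : HeisV r) : HeisV r :=
  (fun i => v.2.2.1 * (a i * u.1 i - b i * u.2.1 i)
      - u.2.2.1 * (a i * v.1 i - b i * v.2.1 i),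
   fun i => v.2.2.1 * (b i * u.1 i + a i * u.2.1 i)
      - u.2.2.1 * (b i * v.1 i + a i * v.2.1 i),
   0, 0)

/-- The almost complex structure of Example 1: `J X_i = Y_i`, `J Y_i = -X_i`,
`J W = Z`, `J Z = -W`. -/
def heisJ (r : ℕ) (u : HeisV r) : HeisV r :=
  (fun i => -u.2.1 i, u.1, u.2.2.2, -u.2.2.1)

/-- The almost complex structure `J` of Example 1 is integrable:
`[x,y] - [Jx,Jy] + J[Jx,y] + J[x,Jy] = 0` for all `x, y`. -/
theorem example1_J_integrable
    (r : ℕ) (a b : Fin r → ℝ) (hab : ∀ i, (a i, b i) ≠ (0, 0)) :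
    ∀ u v : HeisV r,
      heisBr r a b u v - heisBr r a b (heisJ r u) (heisJ r v)
        + heisJ r (heisBr r a b (heisJ r u) v)
        + heisJ r (heisBr r a b u (heisJ r v)) = 0 := by
  intro u v
  simp only [heisBr, heisJ, Prod.ext_iff, Prod.mk_add_mk, Prod.mk_sub_mk, Prod.add_def,
    Prod.sub_def, Prod.fst_zero, Prod.snd_zero]
  refine ⟨funext fun i => ?_, funext fun i => ?_, ?_, ?_⟩ <;> simp <;> ring
end

section
/- Let $n$, $r < n$, and suppose structure constants $D^b_{ac}$ have the form $D^j_{i\alpha} = Y_{i\alpha}\delta_{ij}$ for $1\le i,j\le r$, $r<\alpha\le n$ (complex constants $Y_{i\alpha}$), with all other components zero. Then the Chern curvature $R_{a\bar b c\bar d} = \sum_s(D^s_{ca}\overline{D^s_{db}} - D^d_{sa}\overline{D^c_{sb}} - D^b_{sa}\overline{D^c_{ds}} - \overline{D^a_{sb}}D^d_{cs})$ vanishes identically, i.e., $R_{a\bar b c\bar d} = 0$ for all indices $1\le a,b,c,d\le n$. -/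
open Finset Complex

/-- If the structure constants have the diagonal form
`D^j_{iα} = Y_{iα} δ_{ij}` (`1 ≤ i,j ≤ r`, `r < α ≤ n`), all other components being
zero, then the Chern curvature vanishes identically.
Convention: `D j i k = D^j_{ik}`. -/
theorem diagonal_structure_constants_flat
    (n r : ℕ) (hrn : r < n) (Y : ℕ → ℕ → ℂ) (D : ℕ → ℕ → ℕ → ℂ)
    (hdiag : ∀ i ∈ Finset.Icc 1 r, ∀ j ∈ Finset.Icc 1 r, ∀ α ∈ Finset.Icc (r+1) n,
        D j i α = if i = j then Y i α else 0)
    (hzero : ∀ j i a,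
        ¬(j ∈ Finset.Icc 1 r ∧ i ∈ Finset.Icc 1 r ∧ a ∈ Finset.Icc (r+1) n) →
        D j i a = 0) :
    ∀ a ∈ Finset.Icc 1 n, ∀ b ∈ Finset.Icc 1 n, ∀ c ∈ Finset.Icc 1 n,
      ∀ d ∈ Finset.Icc 1 n,
        (∑ s ∈ Finset.Icc 1 n,
          (D s c a * starRingEnd ℂ (D s d b) - D d s a * starRingEnd ℂ (D c s b)
            - D b s a * starRingEnd ℂ (D c d s)
            - starRingEnd ℂ (D a s b) * D d c s)) = 0 := by
  have hD : ∀ j i a, D j i a =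
      if i = j ∧ 1 ≤ i ∧ i ≤ r ∧ r + 1 ≤ a ∧ a ≤ n then Y i a else 0 := by
    intro j i a
    by_cases h : j ∈ Finset.Icc 1 r ∧ i ∈ Finset.Icc 1 r ∧ a ∈ Finset.Icc (r+1) n
    · rw [hdiag i h.2.1 j h.1 a h.2.2]
      simp only [Finset.mem_Icc] at h
      split_ifs <;> tauto
    · rw [hzero j i a h]
      simp only [Finset.mem_Icc] at h
      split_ifs with hc
      · exact absurd hc (by omega)
      · rfl
  intro a ha b hb c hc d hd
  apply Finset.sum_eq_zero
  intro s hs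
  have e3 : D b s a * starRingEnd ℂ (D c d s) = 0 := by
    rw [hD b s a, hD c d s, apply_ite (starRingEnd ℂ), map_zero]
    split_ifs <;> first | ring1 | (exfalso; omega)
  have e4 : starRingEnd ℂ (D a s b) * D d c s = 0 := by
    rw [hD a s b, hD d c s, apply_ite (starRingEnd ℂ), map_zero]
    split_ifs <;> first | ring1 | (exfalso; omega)
  have e12 : D s c a * starRingEnd ℂ (D s d b)
      = D d s a * starRingEnd ℂ (D c s b) := by
    rw [hD s c a, hD s d b, hD d s a, hD c s b]
    simp only [apply_ite (starRingEnd ℂ), map_zero]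
    split_ifs <;>
      first
        | ring1
        | (exfalso; omega)
        | (obtain ⟨h1', -⟩ := ‹c = s ∧ _›
           obtain ⟨h2', -⟩ := ‹d = s ∧ _›
           rw [h1', h2'])
  rw [e3, e4, e12]
  ring
end

section
/- Suppose complex numbers $Y_{i\alpha}$ ($1\le i\le r$, $r<\alpha\le n$) and $C^b_{ac}$ satisfy, for all $1\le i,j,k\le r$ and $r<\alpha,\beta,\gamma\le n$: $\overline{Y_{i\alpha}}\,C^i_{\beta\gamma} = 0$, $(\overline{Y_{i\alpha}} - \overline{Y_{j\alpha}})\,C^j_{i\beta} = 0$, and $(\overline{Y_{j\alpha}} - \overline{Y_{i\alpha}} - \overline{Y_{k\alpha}})\,C^j_{ik} = 0$. Partition $\{1,\dots,r\}$ into blocks $I_0, I_1,\dots,I_\ell$ where $I_0$ consists of indices $i$ with $Y_{i\alpha} = 0$ for all $\alpha$, and $i,k$ lie in the same block $I_m$ ($m\ge 1$) iff $Y_{i\alpha} = Y_{k\alpha}$ for all $\alpha$. Then $C^i_{\alpha\beta} = 0$ unless $i \in I_0$, and each matrix $C_\beta = (C^j_{i\beta})_{1\le i,j\le r}$ is block-diagonal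 with respect to the partition (i.e., $C^j_{i\beta} = 0$ whenever $i$ and $j$ lie in different blocks). -/
open Finset Complex

/-- Derivation of (4.4) from (4.3): under the displayed relations between
`Y` and `C`, one has `C^i_{αβ} = 0` unless the `i`-th row of `Y` vanishes (i.e. `i ∈ I₀`),
and each matrix `C_β = (C^j_{iβ})` is block-diagonal with respect to the partition of
`{1,…,r}` by equal rows of `Y` (indices in different blocks have different rows).
Convention: `C b a c = C^b_{ac}`, `Y i α = Y_{iα}`. -/
theorem block_diagonal_structure
    (n r : ℕ) (hrn : r < n) (Y : ℕ → ℕ → ℂ) (C : ℕ → ℕ → ℕ → ℂ)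
    (h1 : ∀ i ∈ Finset.Icc 1 r, ∀ α ∈ Finset.Icc (r+1) n, ∀ β ∈ Finset.Icc (r+1) n,
        ∀ γ ∈ Finset.Icc (r+1) n, starRingEnd ℂ (Y i α) * C i β γ = 0)
    (h2 : ∀ i ∈ Finset.Icc 1 r, ∀ j ∈ Finset.Icc 1 r, ∀ α ∈ Finset.Icc (r+1) n,
        ∀ β ∈ Finset.Icc (r+1) n,
        (starRingEnd ℂ (Y i α) - starRingEnd ℂ (Y j α)) * C j i β = 0)
    (h3 : ∀ i ∈ Finset.Icc 1 r, ∀ j ∈ Finset.Icc 1 r, ∀ k ∈ Finset.Icc 1 r,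
        ∀ α ∈ Finset.Icc (r+1) n,
        (starRingEnd ℂ (Y j α) - starRingEnd ℂ (Y i α) - starRingEnd ℂ (Y k α))
          * C j i k = 0) :
    (∀ i ∈ Finset.Icc 1 r, ∀ α ∈ Finset.Icc (r+1) n, ∀ β ∈ Finset.Icc (r+1) n,
        (∃ α' ∈ Finset.Icc (r+1) n, Y i α' ≠ 0) → C i α β = 0)
    ∧ (∀ i ∈ Finset.Icc 1 r, ∀ j ∈ Finset.Icc 1 r, ∀ β ∈ Finset.Icc (r+1) n,
        (∃ α ∈ Finset.Icc (r+1) n, Y i α ≠ Y j α) → C j i β = 0) := by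
  constructor
  · rintro i hi α hα β hβ ⟨α', hα', hY⟩
    have := h1 i hi α' hα' α hα β hβ
    rcases mul_eq_zero.1 this with h | h
    · exact absurd (by simpa using h) hY
    · exact h
  · rintro i hi j hj β hβ ⟨α, hα, hY⟩
    have := h2 i hi j hj α hα β hβ
    rcases mul_eq_zero.1 this with h | h
    · exact absurd (starRingEnd ℂ |>.injective (sub_eq_zero.1 h)) hY
    · exact h
end
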